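/- arXiv:1401.7889 — 8 statements merged into one kernel-verified Lean document; each statement's English description precedes it below -/
import Mathlib

section
/- Fix k ≥ 0 and let n = 48k+14. Define v : Fin (24k+7) → ZMod n by v(2i) = 6k+1 + i(12k+4) for 0 ≤ i ≤ 12k+3 and v(2i+1) = 12k+3 + i(12k+4) for 0 ≤ i ≤ 12k+2. Then v is injective, and for all indices r, s (not necessarily distinct), v(r) + v(s) + 1 ≠ 0 in ZMod n. -/
private lemma aux0 {n A B : ℕ} (h : (A : ZMod n) = (B : ZMod n)) :
    (n : ℤ) ∣ (B : ℤ) - (A : ℤ) := by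
  have h1 : A ≡ B [MOD n] := (ZMod.natCast_eq_natCast_iff _ _ _).mp h
  have h2 : (A : ℤ) % (n : ℤ) = (B : ℤ) % (n : ℤ) := by
    rw [← Int.natCast_mod, ← Int.natCast_mod]
    exact_mod_cast h1
  exact Int.ModEq.dvd h2

private lemma aux1 (k : ℕ) (t : ℤ) (hb : t.natAbs < 24*k+7)
    (h : ((48*k+14 : ℕ) : ℤ) ∣ t * (12*(k:ℤ)+4)) : t = 0 := by
  have h2 : (24*(k:ℤ)+7) ∣ t * (6*(k:ℤ)+2) := by
    rcases h with ⟨c, hc⟩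
    push_cast at hc
    refine ⟨c, ?_⟩
    have h3 : (2:ℤ) * (t * (6*(k:ℤ)+2)) = 2 * ((24*(k:ℤ)+7) * c) := by linarith
    exact mul_left_cancel₀ two_ne_zero h3
  have hco : IsCoprime (24*(k:ℤ)+7) (6*(k:ℤ)+2) := ⟨-1, 4, by ring⟩
  have h4 := hco.dvd_of_dvd_mul_right h2
  rcases eq_or_ne t 0 with h0 | h0
  · exact h0
  · exfalso
    have h5 := Int.le_of_dvd (abs_pos.mpr h0) ((dvd_abs _ _).mpr h4)
    rw [Int.abs_eq_natAbs] at h5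
    omega

private lemma aux2 (k : ℕ) (t : ℤ) (hlo : -(12*(k:ℤ)+3) ≤ t) (hhi : t ≤ 12*(k:ℤ)+2)
    (h : ((48*k+14 : ℕ) : ℤ) ∣ (6*(k:ℤ)+2 + t * (12*(k:ℤ)+4))) : False := by
  have h2 : (24*(k:ℤ)+7) ∣ (3*(k:ℤ)+1) * (2*t+1) := by
    rcases h with ⟨c, hc⟩
    push_cast at hc
    refine ⟨c, ?_⟩
    have h3 : (2:ℤ) * ((3*(k:ℤ)+1) * (2*t+1)) = 2 * ((24*(k:ℤ)+7) * c) := by linarith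
    exact mul_left_cancel₀ two_ne_zero h3
  have hco : IsCoprime (24*(k:ℤ)+7) (3*(k:ℤ)+1) := ⟨-1, 8, by ring⟩
  have h4 := hco.dvd_of_dvd_mul_left h2
  have hne : 2*t+1 ≠ 0 := by omega
  have h5 := Int.le_of_dvd (abs_pos.mpr hne) ((dvd_abs _ _).mpr h4)
  rw [Int.abs_eq_natAbs] at h5
  omega

theorem stmt7 (k : ℕ) (v : Fin (24*k+7) → ZMod (48*k+14))
    (h_even : ∀ i : ℕ, (h : 2*i < 24*k+7) →
      v ⟨2*i, h⟩ = ((6*k+1 + i*(12*k+4) : ℕ) : ZMod (48*k+14)))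
    (h_odd : ∀ i : ℕ, (h : 2*i+1 < 24*k+7) →
      v ⟨2*i+1, h⟩ = ((12*k+3 + i*(12*k+4) : ℕ) : ZMod (48*k+14))) :
    Function.Injective v ∧ ∀ r s, v r + v s + 1 ≠ 0 := by
  have key : ∀ a : Fin (24*k+7),
      (∃ i : ℕ, i ≤ 12*k+3 ∧ (a:ℕ) = 2*i ∧
        v a = ((6*k+1 + i*(12*k+4) : ℕ) : ZMod (48*k+14))) ∨
      (∃ i : ℕ, i ≤ 12*k+2 ∧ (a:ℕ) = 2*i+1 ∧
        v a = ((12*k+3 + i*(12*k+4) : ℕ) : ZMod (48*k+14))) := by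
    intro a
    have hlt := a.isLt
    rcases Nat.even_or_odd (a:ℕ) with ⟨i, hi⟩ | ⟨i, hi⟩
    · left
      have h2 : 2*i < 24*k+7 := by omega
      refine ⟨i, by omega, by omega, ?_⟩
      have ha : a = ⟨2*i, h2⟩ := Fin.ext (show (a:ℕ) = 2*i by omega)
      rw [ha]; exact h_even i h2
    · right
      have h2 : 2*i+1 < 24*k+7 := by omega
      refine ⟨i, by omega, by omega, ?_⟩
      have ha : a = ⟨2*i+1, h2⟩ := Fin.ext (show (a:ℕ) = 2*i+1 by omega)
      rw [ha]; exact h_odd i h2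
  constructor
  · intro a b hab
    rcases key a with ⟨i, hi, hai, hva⟩ | ⟨i, hi, hai, hva⟩ <;>
      rcases key b with ⟨j, hj, hbj, hvb⟩ | ⟨j, hj, hbj, hvb⟩ <;>
      rw [hva, hvb] at hab <;> have hd := aux0 hab
    · -- even / even
      have hd' : ((48*k+14 : ℕ) : ℤ) ∣ ((j:ℤ) - (i:ℤ)) * (12*(k:ℤ)+4) := by
        have e : ((j:ℤ) - (i:ℤ)) * (12*(k:ℤ)+4)
            = ((6*k+1 + j*(12*k+4) : ℕ) : ℤ) - ((6*k+1 + i*(12*k+4) : ℕ) : ℤ) := by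
          push_cast; ring
        rw [e]; exact hd
      have ht := aux1 k ((j:ℤ) - (i:ℤ)) (by omega) hd'
      exact Fin.ext (by omega)
    · -- even / odd : contradiction
      exfalso
      apply aux2 k ((j:ℤ) - (i:ℤ)) (by omega) (by omega)
      have e : (6*(k:ℤ)+2 + ((j:ℤ) - (i:ℤ)) * (12*(k:ℤ)+4))
          = ((12*k+3 + j*(12*k+4) : ℕ) : ℤ) - ((6*k+1 + i*(12*k+4) : ℕ) : ℤ) := by
        push_cast; ring
      rw [e]; exact hd
    · -- odd / even : contradiction
      exfalso
      apply aux2 k ((i:ℤ) - (j:ℤ)) (by omega) (by omega)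
      have e : (6*(k:ℤ)+2 + ((i:ℤ) - (j:ℤ)) * (12*(k:ℤ)+4))
          = -(((6*k+1 + j*(12*k+4) : ℕ) : ℤ) - ((12*k+3 + i*(12*k+4) : ℕ) : ℤ)) := by
        push_cast; ring
      rw [e]; exact dvd_neg.mpr hd
    · -- odd / odd
      have hd' : ((48*k+14 : ℕ) : ℤ) ∣ ((j:ℤ) - (i:ℤ)) * (12*(k:ℤ)+4) := by
        have e : ((j:ℤ) - (i:ℤ)) * (12*(k:ℤ)+4)
            = ((12*k+3 + j*(12*k+4) : ℕ) : ℤ) - ((12*k+3 + i*(12*k+4) : ℕ) : ℤ) := by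
          push_cast; ring
        rw [e]; exact hd
      have ht := aux1 k ((j:ℤ) - (i:ℤ)) (by omega) hd'
      exact Fin.ext (by omega)
  · -- sums never -1
    have odd_rep : ∀ a : Fin (24*k+7), ∃ x : ℕ, x % 2 = 1 ∧ v a = (x : ZMod (48*k+14)) := by
      intro a
      rcases key a with ⟨i, _, _, hva⟩ | ⟨i, _, _, hva⟩
      · refine ⟨6*k+1 + i*(12*k+4), ?_, hva⟩
        have e : 6*k+1 + i*(12*k+4) = 2*(3*k + i*(6*k+2)) + 1 := by ring
        rw [e, Nat.mul_add_mod]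
      · refine ⟨12*k+3 + i*(12*k+4), ?_, hva⟩
        have e : 12*k+3 + i*(12*k+4) = 2*(6*k+1 + i*(6*k+2)) + 1 := by ring
        rw [e, Nat.mul_add_mod]
    intro r s hsum
    obtain ⟨x, hx, hvx⟩ := odd_rep r
    obtain ⟨y, hy, hvy⟩ := odd_rep s
    rw [hvx, hvy] at hsum
    have h0 : ((x + y + 1 : ℕ) : ZMod (48*k+14)) = 0 := by push_cast; exact hsum
    have hdvd := (ZMod.natCast_eq_zero_iff _ _).mp h0
    have h2 : 2 ∣ x + y + 1 := dvd_trans ⟨24*k+7, by ring⟩ hdvd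
    omega
end

section
/- Let n be even and let v : Fin (n/2) → ZMod n be a function. Define C : Fin n → ZMod n by C(i) = v(i) for i < n/2 and C(n-1-i) = (n-1) - v(i) for i < n/2. If v is injective and v(r) + v(s) + 1 ≠ 0 in ZMod n for all r, s, then C is a bijection from Fin n to ZMod n. -/
theorem stmt9 (n : ℕ) (hn : 0 < n) (hne : Even n)
    (v : Fin (n/2) → ZMod n) (C : Fin n → ZMod n)
    (hC1 : ∀ i : ℕ, (h : i < n/2) → C ⟨i, by omega⟩ = v ⟨i, h⟩)
    (hC2 : ∀ i : ℕ, (h : i < n/2) → C ⟨n-1-i, by omega⟩ = ((n:ZMod n) - 1) - v ⟨i, h⟩)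
    (hv : Function.Injective v)
    (hsum : ∀ r s, v r + v s + 1 ≠ 0) :
    Function.Bijective C := by
  haveI : NeZero n := ⟨hn.ne'⟩
  obtain ⟨k, hk⟩ := hne
  have hn0 : (n : ZMod n) = 0 := ZMod.natCast_self n
  have key : ∀ j : Fin n, (∃ h : j.val < n/2, C j = v ⟨j.val, h⟩) ∨
      (∃ i : ℕ, ∃ h : i < n/2, j.val = n-1-i ∧ C j = ((n:ZMod n) - 1) - v ⟨i, h⟩) := by
    intro j
    by_cases hj : j.val < n/2
    · left
      refine ⟨hj, ?_⟩
      have := hC1 j.val hj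
      convert this using 2
    · right
      refine ⟨n-1-j.val, by omega, by omega, ?_⟩
      have := hC2 (n-1-j.val) (by omega)
      have hjj : (⟨n-1-(n-1-j.val), by omega⟩ : Fin n) = j := Fin.ext (by simp; omega)
      rw [hjj] at this
      exact this
  have hinj : Function.Injective C := by
    intro a b hab
    rcases key a with ⟨ha, ea⟩ | ⟨i, hi, hia, ea⟩ <;>
      rcases key b with ⟨hb, eb⟩ | ⟨i', hi', hib, eb⟩
    · have : v ⟨a.val, ha⟩ = v ⟨b.val, hb⟩ := by rw [← ea, ← eb, hab]
      have := hv this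
      exact Fin.ext (by simpa using congrArg Fin.val this)
    · exfalso
      apply hsum ⟨a.val, ha⟩ ⟨i', hi'⟩
      have : v ⟨a.val, ha⟩ = ((n:ZMod n) - 1) - v ⟨i', hi'⟩ := by rw [← ea, ← eb, hab]
      rw [hn0] at this
      linear_combination this
    · exfalso
      apply hsum ⟨b.val, hb⟩ ⟨i, hi⟩
      have : v ⟨b.val, hb⟩ = ((n:ZMod n) - 1) - v ⟨i, hi⟩ := by rw [← eb, ← ea, hab]
      rw [hn0] at this
      linear_combination this
    · have hveq : v ⟨i, hi⟩ = v ⟨i', hi'⟩ := by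
        have : ((n:ZMod n) - 1) - v ⟨i, hi⟩ = ((n:ZMod n) - 1) - v ⟨i', hi'⟩ := by
          rw [← ea, ← eb, hab]
        linear_combination -this
      have := hv hveq
      have hii : i = i' := by simpa using congrArg Fin.val this
      exact Fin.ext (by omega)
  exact (Fintype.bijective_iff_injective_and_card C).mpr ⟨hinj, by simp [ZMod.card]⟩
end

section
/- Fix k ≥ 0 and let n = 48k+22. Define v : Fin (24k+11) → ZMod n by v(2i) = 30k+13 + i(12k+6) for 0 ≤ i ≤ 12k+5 and v(2i+1) = 12k+5 + i(12k+6) for 0 ≤ i ≤ 12k+4. Then v is injective, and for all indices r, s, v(r) + v(s) + 1 ≠ 0 in ZMod n. -/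
lemma aux_cancel13 (k a b : ℕ) (ha : a < 24*k+11) (hb : b < 24*k+11)
    (h : ((a*(12*k+6) : ℕ) : ZMod (48*k+22)) = ((b*(12*k+6) : ℕ) : ZMod (48*k+22))) :
    a = b := by
  rw [ZMod.natCast_eq_natCast_iff] at h
  have hd : ((48*k+22 : ℕ) : ℤ) ∣ (b*(12*k+6) : ℕ) - (a*(12*k+6) : ℕ) := h.dvd
  push_cast at hd
  have h2 : (2*(24*k+11) : ℤ) ∣ 2*(((b:ℤ) - a)*(6*k+3)) := by
    convert hd using 1 <;> ring
  have h3 : ((24*(k:ℤ)+11)) ∣ ((b:ℤ) - a)*(6*k+3) :=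
    (mul_dvd_mul_iff_left (by norm_num : (2:ℤ) ≠ 0)).mp h2
  have hco : IsCoprime ((24*(k:ℤ)+11)) ((6*(k:ℤ)+3)) := ⟨-1, 4, by ring⟩
  have h4 : ((24*(k:ℤ)+11)) ∣ ((b:ℤ) - a) := hco.dvd_of_dvd_mul_right h3
  have h5 : (b:ℤ) - a = 0 := by
    apply Int.eq_zero_of_abs_lt_dvd h4
    rw [abs_sub_lt_iff]
    constructor <;> omega
  omega

theorem stmt13 (k : ℕ) (v : Fin (24*k+11) → ZMod (48*k+22))
    (h_even : ∀ i : ℕ, (h : 2*i < 24*k+11) →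
      v ⟨2*i, h⟩ = ((30*k+13 + i*(12*k+6) : ℕ) : ZMod (48*k+22)))
    (h_odd : ∀ i : ℕ, (h : 2*i+1 < 24*k+11) →
      v ⟨2*i+1, h⟩ = ((12*k+5 + i*(12*k+6) : ℕ) : ZMod (48*k+22))) :
    Function.Injective v ∧ ∀ r s, v r + v s + 1 ≠ 0 := by
  have hn : ((48*k+22 : ℕ) : ZMod (48*k+22)) = 0 := ZMod.natCast_self _
  push_cast at hn
  have key : ∀ r : Fin (24*k+11), ∃ j : ℕ, j < 24*k+11 ∧
      v r = ((12*k+5 + j*(12*k+6) : ℕ) : ZMod (48*k+22)) ∧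
      ((r : ℕ) = 2*(j - (12*k+5)) ∧ 12*k+5 ≤ j ∨ (r : ℕ) = 2*j+1 ∧ j ≤ 12*k+4) := by
    intro r
    obtain ⟨m, hm⟩ := r
    rcases Nat.even_or_odd m with ⟨i, hi⟩ | ⟨i, hi⟩
    · have h2 : 2*i < 24*k+11 := by omega
      refine ⟨i + (12*k+5), by omega, ?_,
        Or.inl ⟨by simp only [Fin.val_mk]; omega, by omega⟩⟩
      have hr : (⟨m, hm⟩ : Fin (24*k+11)) = ⟨2*i, h2⟩ := by
        simp only [Fin.mk.injEq]; omega
      rw [hr, h_even i h2]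
      push_cast
      linear_combination (-3*(k:ZMod (48*k+22))-1) * hn
    · have h2 : 2*i+1 < 24*k+11 := by omega
      refine ⟨i, by omega, ?_,
        Or.inr ⟨by simp only [Fin.val_mk]; omega, by omega⟩⟩
      have hr : (⟨m, hm⟩ : Fin (24*k+11)) = ⟨2*i+1, h2⟩ := by
        simp only [Fin.mk.injEq]; omega
      rw [hr, h_odd i h2]
  have heq : ∀ r s : Fin (24*k+11), v r = v s → r = s := by
    intro r s h
    obtain ⟨j, hj, hv, hc⟩ := key r
    obtain ⟨j', hj', hv', hc'⟩ := key s
    rw [hv, hv'] at h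
    have : j = j' := by
      apply aux_cancel13 k j j' hj hj'
      push_cast at h ⊢
      linear_combination h
    subst this
    ext
    omega
  refine ⟨heq, ?_⟩
  intro r s h
  have h2 : (2:ℕ) ∣ 48*k+22 := by omega
  let φ := ZMod.castHom h2 (ZMod 2)
  have hone : ∀ t, φ (v t) = 1 := by
    intro t
    obtain ⟨j, hj, hv, _⟩ := key t
    rw [hv, map_natCast]
    rw [show (12*k+5 + j*(12*k+6)) = 2*(6*k+2 + j*(6*k+3)) + 1 from by ring]
    push_cast
    rw [show (2 : ZMod 2) = 0 from rfl]
    ring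
  have := congrArg φ h
  rw [map_zero, map_add, map_add, map_one, hone, hone] at this
  exact absurd this (by decide)
end

section
/- Fix k ≥ 0 and let n = 48k+22. Define v : Fin (24k+11) → ZMod n by v(2i) = 30k+14 + i(12k+7) for 0 ≤ i ≤ 12k+5 and v(2i+1) = 24k+12 + i(12k+7) for 0 ≤ i ≤ 12k+4. Then v is injective, and for all indices r, s, v(r) + v(s) + 1 ≠ 0 in ZMod n. -/
private lemma aux_inj_same (k i j c : ℤ) (hk : 0 ≤ k) (hi : 0 ≤ i) (hi2 : i ≤ 12*k+5)
    (hj : 0 ≤ j) (hj2 : j ≤ 12*k+5)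
    (hc : j*(12*k+7) - i*(12*k+7) = (48*k+22)*c) : i = j := by
  have h2 : (48*k+22)*(4*c - (j-i)) = 6*(j-i) := by linear_combination (-4)*hc
  have hb1 : 4*c - (j-i) ≤ 1 := by nlinarith
  have hb2 : -1 ≤ 4*c - (j-i) := by nlinarith
  have h3 : 4*c - (j-i) = -1 ∨ 4*c - (j-i) = 0 ∨ 4*c - (j-i) = 1 := by omega
  rcases h3 with h3 | h3 | h3 <;> rw [h3] at h2 <;> omega

private lemma aux_inj_cross (k i j c : ℤ) (hk : 0 ≤ k) (hi : 0 ≤ i) (hi2 : i ≤ 12*k+5)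
    (hj : 0 ≤ j) (hj2 : j ≤ 12*k+4)
    (hc : (j-i)*(12*k+7) - (6*k+2) = (48*k+22)*c) : False := by
  have h2 : (48*k+22)*(4*c - (j-i)) = 6*(j-i) - (24*k+8) := by linear_combination (-4)*hc
  have hb1 : 4*c - (j-i) ≤ 0 := by nlinarith
  have hb2 : -1 ≤ 4*c - (j-i) := by nlinarith
  have h3 : 4*c - (j-i) = -1 ∨ 4*c - (j-i) = 0 := by omega
  rcases h3 with h3 | h3 <;> rw [h3] at h2 <;> omega

private lemma aux_sum_EE (k s c : ℤ) (hk : 0 ≤ k) (hs : 0 ≤ s) (hs2 : s ≤ 24*k+10)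
    (hc : 60*k+29 + s*(12*k+7) = (48*k+22)*c) : False := by
  have h2 : (48*k+22)*(4*c - s) = 6*s + 240*k+116 := by linear_combination (-4)*hc
  have hb1 : 4*c - s ≤ 8 := by nlinarith
  have hb2 : 5 ≤ 4*c - s := by nlinarith
  have h3 : 4*c - s = 5 ∨ 4*c - s = 6 ∨ 4*c - s = 7 ∨ 4*c - s = 8 := by omega
  rcases h3 with h3 | h3 | h3 | h3 <;> rw [h3] at h2
  · omega
  · omega
  · omega
  · have hs8 : s = 24*k+10 := by omega
    subst hs8
    have h4 : (48*k+22)*(c - (6*k+4)) = 24*k+11 := by linear_combination -hc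
    have hdvd : (48*k+22) ∣ 24*k+11 := ⟨c - (6*k+4), h4.symm⟩
    have := Int.le_of_dvd (by omega) hdvd
    omega

private lemma aux_sum_EO (k s c : ℤ) (hk : 0 ≤ k) (hs : 0 ≤ s) (hs2 : s ≤ 24*k+9)
    (hc : 54*k+27 + s*(12*k+7) = (48*k+22)*c) : False := by
  have h2 : (48*k+22)*(4*c - s) = 6*s + 216*k+108 := by linear_combination (-4)*hc
  have hb1 : 4*c - s ≤ 7 := by nlinarith
  have hb2 : 5 ≤ 4*c - s := by nlinarith
  have h3 : 4*c - s = 5 ∨ 4*c - s = 6 ∨ 4*c - s = 7 := by omega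
  rcases h3 with h3 | h3 | h3 <;> rw [h3] at h2
  · omega
  · have hs6 : s = 12*k+4 := by omega
    subst hs6
    have h4 : (48*k+22)*(c - (3*k+2)) = 24*k+11 := by linear_combination -hc
    have hdvd : (48*k+22) ∣ 24*k+11 := ⟨c - (3*k+2), h4.symm⟩
    have := Int.le_of_dvd (by omega) hdvd
    omega
  · omega

private lemma aux_sum_OO (k s c : ℤ) (hk : 0 ≤ k) (hs : 0 ≤ s) (hs2 : s ≤ 24*k+8)
    (hc : 48*k+25 + s*(12*k+7) = (48*k+22)*c) : False := by
  have h2 : (48*k+22)*(4*c - s) = 6*s + 192*k+100 := by linear_combination (-4)*hc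
  have hb1 : 4*c - s ≤ 6 := by nlinarith
  have hb2 : 5 ≤ 4*c - s := by nlinarith
  have h3 : 4*c - s = 5 ∨ 4*c - s = 6 := by omega
  rcases h3 with h3 | h3 <;> rw [h3] at h2 <;> omega

theorem stmt14 (k : ℕ) (v : Fin (24*k+11) → ZMod (48*k+22))
    (h_even : ∀ i : ℕ, (h : 2*i < 24*k+11) →
      v ⟨2*i, h⟩ = ((30*k+14 + i*(12*k+7) : ℕ) : ZMod (48*k+22)))
    (h_odd : ∀ i : ℕ, (h : 2*i+1 < 24*k+11) →
      v ⟨2*i+1, h⟩ = ((24*k+12 + i*(12*k+7) : ℕ) : ZMod (48*k+22))) :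
    Function.Injective v ∧ ∀ r s, v r + v s + 1 ≠ 0 := by
  have key : ∀ r : Fin (24*k+11), ∃ i,
      (r.1 = 2*i ∧ i ≤ 12*k+5 ∧ v r = ((30*k+14 + i*(12*k+7) : ℕ) : ZMod (48*k+22))) ∨
      (r.1 = 2*i+1 ∧ i ≤ 12*k+4 ∧ v r = ((24*k+12 + i*(12*k+7) : ℕ) : ZMod (48*k+22))) := by
    intro r
    rcases Nat.even_or_odd r.1 with ⟨i, hi⟩ | ⟨i, hi⟩
    · refine ⟨i, Or.inl ⟨by omega, by have := r.2; omega, ?_⟩⟩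
      rw [show r = ⟨2*i, by have := r.2; omega⟩ from Fin.ext (show r.1 = 2*i by omega)]
      exact h_even i (by have := r.2; omega)
    · refine ⟨i, Or.inr ⟨by omega, by have := r.2; omega, ?_⟩⟩
      rw [show r = ⟨2*i+1, by have := r.2; omega⟩ from Fin.ext (show r.1 = 2*i+1 by omega)]
      exact h_odd i (by have := r.2; omega)
  constructor
  · intro r s hrs
    obtain ⟨i, hi⟩ := key r
    obtain ⟨j, hj⟩ := key s
    rcases hi with ⟨hr1, hr2, hr3⟩ | ⟨hr1, hr2, hr3⟩ <;>
      rcases hj with ⟨hs1, hs2, hs3⟩ | ⟨hs1, hs2, hs3⟩ <;>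
      rw [hr3, hs3] at hrs <;>
      obtain ⟨c, hc⟩ := ((ZMod.natCast_eq_natCast_iff _ _ _).1 hrs).dvd <;>
      push_cast at hc
    · -- even even
      have hij : (i : ℤ) = j := by
        refine aux_inj_same k i j c (by positivity) (by positivity) (by exact_mod_cast hr2)
          (by positivity) (by exact_mod_cast hs2) (by linear_combination hc)
      exact Fin.ext (by omega)
    · -- even odd
      exact (aux_inj_cross k i j c (by positivity) (by positivity) (by exact_mod_cast hr2)
          (by positivity) (by exact_mod_cast hs2) (by linear_combination hc)).elim
    · -- odd even
      exact (aux_inj_cross k j i (-c) (by positivity) (by positivity) (by exact_mod_cast hs2)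
          (by positivity) (by exact_mod_cast hr2) (by linear_combination -hc)).elim
    · -- odd odd
      have hij : (i : ℤ) = j := by
        refine aux_inj_same k i j c (by positivity) (by positivity) (by omega)
          (by positivity) (by omega) (by linear_combination hc)
      exact Fin.ext (by omega)
  · intro r s h0
    obtain ⟨i, hi⟩ := key r
    obtain ⟨j, hj⟩ := key s
    rcases hi with ⟨hr1, hr2, hr3⟩ | ⟨hr1, hr2, hr3⟩ <;>
      rcases hj with ⟨hs1, hs2, hs3⟩ | ⟨hs1, hs2, hs3⟩ <;>
      rw [hr3, hs3] at h0
    · have h1 : (((30*k+14 + i*(12*k+7)) + (30*k+14 + j*(12*k+7)) + 1 : ℕ) :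
          ZMod (48*k+22)) = 0 := by push_cast at h0 ⊢; linear_combination h0
      obtain ⟨c, hc⟩ := (ZMod.natCast_eq_zero_iff _ _).1 h1
      have hc' : ((30*k+14 + i*(12*k+7)) + (30*k+14 + j*(12*k+7)) + 1 : ℤ)
          = (48*k+22)*c := by exact_mod_cast hc
      exact aux_sum_EE k ((i:ℤ)+j) c (by positivity) (by positivity)
        (by have : (i:ℤ) ≤ 12*k+5 := by exact_mod_cast hr2
            have : (j:ℤ) ≤ 12*k+5 := by exact_mod_cast hs2
            omega)
        (by linear_combination hc')
    · have h1 : (((30*k+14 + i*(12*k+7)) + (24*k+12 + j*(12*k+7)) + 1 : ℕ) :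
          ZMod (48*k+22)) = 0 := by push_cast at h0 ⊢; linear_combination h0
      obtain ⟨c, hc⟩ := (ZMod.natCast_eq_zero_iff _ _).1 h1
      have hc' : ((30*k+14 + i*(12*k+7)) + (24*k+12 + j*(12*k+7)) + 1 : ℤ)
          = (48*k+22)*c := by exact_mod_cast hc
      exact aux_sum_EO k ((i:ℤ)+j) c (by positivity) (by positivity)
        (by have : (i:ℤ) ≤ 12*k+5 := by exact_mod_cast hr2
            have : (j:ℤ) ≤ 12*k+4 := by exact_mod_cast hs2
            omega)
        (by linear_combination hc')
    · have h1 : (((24*k+12 + i*(12*k+7)) + (30*k+14 + j*(12*k+7)) + 1 : ℕ) :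
          ZMod (48*k+22)) = 0 := by push_cast at h0 ⊢; linear_combination h0
      obtain ⟨c, hc⟩ := (ZMod.natCast_eq_zero_iff _ _).1 h1
      have hc' : ((24*k+12 + i*(12*k+7)) + (30*k+14 + j*(12*k+7)) + 1 : ℤ)
          = (48*k+22)*c := by exact_mod_cast hc
      exact aux_sum_EO k ((i:ℤ)+j) c (by positivity) (by positivity)
        (by have : (i:ℤ) ≤ 12*k+4 := by exact_mod_cast hr2
            have : (j:ℤ) ≤ 12*k+5 := by exact_mod_cast hs2
            omega)
        (by linear_combination hc')
    · have h1 : (((24*k+12 + i*(12*k+7)) + (24*k+12 + j*(12*k+7)) + 1 : ℕ) :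
          ZMod (48*k+22)) = 0 := by push_cast at h0 ⊢; linear_combination h0
      obtain ⟨c, hc⟩ := (ZMod.natCast_eq_zero_iff _ _).1 h1
      have hc' : ((24*k+12 + i*(12*k+7)) + (24*k+12 + j*(12*k+7)) + 1 : ℤ)
          = (48*k+22)*c := by exact_mod_cast hc
      exact aux_sum_OO k ((i:ℤ)+j) c (by positivity) (by positivity)
        (by have : (i:ℤ) ≤ 12*k+4 := by exact_mod_cast hr2
            have : (j:ℤ) ≤ 12*k+4 := by exact_mod_cast hs2
            omega)
        (by linear_combination hc')
end

section
/- Fix k ≥ 0 and let n = 48k+38. Define v : Fin (24k+19) → ZMod n by v(2i) = 30k+23 + i(12k+10) for 0 ≤ i ≤ 12k+9 and v(2i+1) = 12k+9 + i(12k+10) for 0 ≤ i ≤ 12k+8. Then v is injective, and for all indices r, s, v(r) + v(s) + 1 ≠ 0 in ZMod n. -/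
theorem stmt16 (k : ℕ) (v : Fin (24*k+19) → ZMod (48*k+38))
    (h_even : ∀ i : ℕ, (h : 2*i < 24*k+19) →
      v ⟨2*i, h⟩ = ((30*k+23 + i*(12*k+10) : ℕ) : ZMod (48*k+38)))
    (h_odd : ∀ i : ℕ, (h : 2*i+1 < 24*k+19) →
      v ⟨2*i+1, h⟩ = ((12*k+9 + i*(12*k+10) : ℕ) : ZMod (48*k+38))) :
    Function.Injective v ∧ ∀ r s, v r + v s + 1 ≠ 0 := by
  have hdvd : (24*k+19) ∣ (48*k+38) := ⟨2, by ring⟩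
  have h2 : (2:ℕ) ∣ (48*k+38) := ⟨24*k+19, by ring⟩
  set f := ZMod.castHom hdvd (ZMod (24*k+19)) with hf
  set g := ZMod.castHom h2 (ZMod 2) with hg
  have key : ∀ j : Fin (24*k+19), ∃ c : ℕ, c < 24*k+19 ∧
      (j.val % 2 = 0 → c = j.val/2) ∧ (j.val % 2 = 1 → c = 12*k+10 + j.val/2) ∧
      2 * f (v j) = ((12*k+8 + c : ℕ) : ZMod (24*k+19)) := by
    intro j
    have hlt := j.isLt
    rcases Nat.mod_two_eq_zero_or_one j.val with hp | hp
    · obtain ⟨i, hi⟩ : ∃ i, j.val = 2*i := ⟨j.val/2, by omega⟩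
      refine ⟨i, by omega, fun _ => by omega, fun h0 => by omega, ?_⟩
      have hj : j = ⟨2*i, by omega⟩ := Fin.ext hi
      rw [hj, h_even i (by omega), map_natCast]
      have e1 : (60*k+46 + i*(24*k+20) : ℕ) = (12*k+8+i) + (i+2)*(24*k+19) := by ring
      calc 2 * ((30*k+23+i*(12*k+10) : ℕ) : ZMod (24*k+19))
          = ((60*k+46 + i*(24*k+20) : ℕ) : ZMod (24*k+19)) := by push_cast; ring
        _ = ((12*k+8+i : ℕ) : ZMod (24*k+19)) := by
            rw [e1, Nat.cast_add, Nat.cast_mul, ZMod.natCast_self, mul_zero, add_zero]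
    · obtain ⟨i, hi⟩ : ∃ i, j.val = 2*i+1 := ⟨j.val/2, by omega⟩
      refine ⟨12*k+10+i, by omega, fun h0 => by omega, fun _ => by omega, ?_⟩
      have hj : j = ⟨2*i+1, by omega⟩ := Fin.ext hi
      rw [hj, h_odd i (by omega), map_natCast]
      have e1 : (24*k+18 + i*(24*k+20) : ℕ) = (12*k+8+(12*k+10+i)) + i*(24*k+19) := by
        ring
      calc 2 * ((12*k+9+i*(12*k+10) : ℕ) : ZMod (24*k+19))
          = ((24*k+18 + i*(24*k+20) : ℕ) : ZMod (24*k+19)) := by push_cast; ring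
        _ = ((12*k+8+(12*k+10+i) : ℕ) : ZMod (24*k+19)) := by
            rw [e1, Nat.cast_add, Nat.cast_mul, ZMod.natCast_self, mul_zero, add_zero]
  have par : ∀ j, g (v j) = 1 := by
    intro j
    have hlt := j.isLt
    rcases Nat.mod_two_eq_zero_or_one j.val with hp | hp
    · obtain ⟨i, hi⟩ : ∃ i, j.val = 2*i := ⟨j.val/2, by omega⟩
      have hj : j = ⟨2*i, by omega⟩ := Fin.ext hi
      rw [hj, h_even i (by omega), map_natCast,
        show 30*k+23 + i*(12*k+10) = 2*(15*k+11+i*(6*k+5)) + 1 by ring]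
      push_cast
      rw [show (2 : ZMod 2) = 0 by decide]
      ring
    · obtain ⟨i, hi⟩ : ∃ i, j.val = 2*i+1 := ⟨j.val/2, by omega⟩
      have hj : j = ⟨2*i+1, by omega⟩ := Fin.ext hi
      rw [hj, h_odd i (by omega), map_natCast,
        show 12*k+9 + i*(12*k+10) = 2*(6*k+4+i*(6*k+5)) + 1 by ring]
      push_cast
      rw [show (2 : ZMod 2) = 0 by decide]
      ring
  constructor
  · intro a b hab
    obtain ⟨ca, hca, hae, hao, hA⟩ := key a
    obtain ⟨cb, hcb, hbe, hbo, hB⟩ := key b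
    have hcc : ((12*k+8+ca : ℕ) : ZMod (24*k+19)) = ((12*k+8+cb : ℕ) : ZMod (24*k+19)) := by
      rw [← hA, ← hB, hab]
    have hm : (12*k+8+ca) ≡ (12*k+8+cb) [MOD (24*k+19)] :=
      (ZMod.natCast_eq_natCast_iff _ _ _).mp hcc
    have hm2 : ca ≡ cb [MOD (24*k+19)] := Nat.ModEq.add_left_cancel' _ hm
    have hceq : ca = cb := by
      have h' := hm2
      unfold Nat.ModEq at h'
      rwa [Nat.mod_eq_of_lt hca, Nat.mod_eq_of_lt hcb] at h'
    have ha := a.isLt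
    have hb := b.isLt
    apply Fin.ext
    rcases Nat.mod_two_eq_zero_or_one a.val with h1 | h1 <;>
      rcases Nat.mod_two_eq_zero_or_one b.val with hh2 | hh2
    · have e1 := hae h1; have e2 := hbe hh2; omega
    · have e1 := hae h1; have e2 := hbo hh2; omega
    · have e1 := hao h1; have e2 := hbe hh2; omega
    · have e1 := hao h1; have e2 := hbo hh2; omega
  · intro r s hrs
    have hz : g (v r + v s + 1) = 0 := by rw [hrs, map_zero]
    rw [map_add, map_add, map_one, par r, par s] at hz
    exact absurd hz (by decide)
end

section
/- Fix k ≥ 0 and let n = 48k+38. Define v : Fin (24k+19) → ZMod n by v(2i) = 30k+24 + i(12k+11) for 0 ≤ i ≤ 12k+9 and v(2i+1) = 24k+20 + i(12k+11) for 0 ≤ i ≤ 12k+8. Then v is injective, and for all indices r, s, v(r) + v(s) + 1 ≠ 0 in ZMod n. -/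
lemma aux17 (k : ℕ) (x c : ℤ) (hd : (48*(k:ℤ)+38) ∣ x*(12*k+11)+c)
    (h1 : -9*(24*(k:ℤ)+19) < 3*x+2*c) (h2 : 3*x+2*c < 9*(24*(k:ℤ)+19)) :
    ∃ t : ℤ, -9 < t ∧ t < 9 ∧ 3*x + 2*c = (24*k+19)*t ∧ (2:ℤ) ∣ x + c := by
  obtain ⟨d, hd⟩ := hd
  have h2d : (2:ℤ) ∣ x + c := ⟨(24*k+19)*d - x*(6*k+5), by linear_combination hd⟩
  have hp0 : (0:ℤ) < 24*k+19 := by positivity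
  refine ⟨4*d - x, ?_, ?_, by linear_combination 2*hd, h2d⟩
  · by_contra hcon
    push_neg at hcon
    have := mul_le_mul_of_nonneg_left hcon (le_of_lt hp0)
    nlinarith [h1, this, hd]
  · by_contra hcon
    push_neg at hcon
    have := mul_le_mul_of_nonneg_left hcon (le_of_lt hp0)
    nlinarith [h2, this, hd]

theorem stmt17 (k : ℕ) (v : Fin (24*k+19) → ZMod (48*k+38))
    (h_even : ∀ i : ℕ, (h : 2*i < 24*k+19) →
      v ⟨2*i, h⟩ = ((30*k+24 + i*(12*k+11) : ℕ) : ZMod (48*k+38)))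
    (h_odd : ∀ i : ℕ, (h : 2*i+1 < 24*k+19) →
      v ⟨2*i+1, h⟩ = ((24*k+20 + i*(12*k+11) : ℕ) : ZMod (48*k+38))) :
    Function.Injective v ∧ ∀ r s, v r + v s + 1 ≠ 0 := by
  have shape : ∀ r : Fin (24*k+19), ∃ i : ℕ,
      (r.val = 2*i ∧ i ≤ 12*k+9 ∧ v r = ((30*k+24 + i*(12*k+11) : ℕ) : ZMod (48*k+38)))
      ∨ (r.val = 2*i+1 ∧ i ≤ 12*k+8 ∧ v r = ((24*k+20 + i*(12*k+11) : ℕ) : ZMod (48*k+38))) := by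
    intro r
    have hlt := r.2
    rcases Nat.even_or_odd r.val with ⟨i, hi⟩ | ⟨i, hi⟩
    · have h2i : 2*i < 24*k+19 := by omega
      refine ⟨i, Or.inl ⟨by omega, by omega, ?_⟩⟩
      rw [show r = ⟨2*i, h2i⟩ from Fin.ext (show r.val = 2*i by omega)]
      exact h_even i h2i
    · have h2i : 2*i+1 < 24*k+19 := by omega
      refine ⟨i, Or.inr ⟨by omega, by omega, ?_⟩⟩
      rw [show r = ⟨2*i+1, h2i⟩ from Fin.ext (show r.val = 2*i+1 by omega)]
      exact h_odd i h2i
  constructor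
  · intro r s h
    obtain ⟨i, ⟨hr1, hr2, hr3⟩ | ⟨hr1, hr2, hr3⟩⟩ := shape r <;>
      obtain ⟨j, ⟨hs1, hs2, hs3⟩ | ⟨hs1, hs2, hs3⟩⟩ := shape s <;>
      rw [hr3, hs3] at h <;>
      [ (obtain ⟨t, h1, h2, h3, h4⟩ := aux17 k ((j:ℤ) - i) 0
            (by obtain ⟨d, hd3⟩ := Nat.ModEq.dvd ((ZMod.natCast_eq_natCast_iff _ _ _).mp h)
                push_cast at hd3
                exact ⟨d, by linear_combination hd3⟩)
            (by push_cast; omega) (by push_cast; omega));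
        (obtain ⟨t, h1, h2, h3, h4⟩ := aux17 k ((j:ℤ) - i) (-(6*(k:ℤ)+4))
            (by obtain ⟨d, hd3⟩ := Nat.ModEq.dvd ((ZMod.natCast_eq_natCast_iff _ _ _).mp h)
                push_cast at hd3
                exact ⟨d, by linear_combination hd3⟩)
            (by push_cast; omega) (by push_cast; omega));
        (obtain ⟨t, h1, h2, h3, h4⟩ := aux17 k ((j:ℤ) - i) (6*(k:ℤ)+4)
            (by obtain ⟨d, hd3⟩ := Nat.ModEq.dvd ((ZMod.natCast_eq_natCast_iff _ _ _).mp h)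
                push_cast at hd3
                exact ⟨d, by linear_combination hd3⟩)
            (by push_cast; omega) (by push_cast; omega));
        (obtain ⟨t, h1, h2, h3, h4⟩ := aux17 k ((j:ℤ) - i) 0
            (by obtain ⟨d, hd3⟩ := Nat.ModEq.dvd ((ZMod.natCast_eq_natCast_iff _ _ _).mp h)
                push_cast at hd3
                exact ⟨d, by linear_combination hd3⟩)
            (by push_cast; omega) (by push_cast; omega))] <;>
      (rw [Fin.ext_iff]; interval_cases t <;> omega)
  · intro r s h
    obtain ⟨i, ⟨hr1, hr2, hr3⟩ | ⟨hr1, hr2, hr3⟩⟩ := shape r <;>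
      obtain ⟨j, ⟨hs1, hs2, hs3⟩ | ⟨hs1, hs2, hs3⟩⟩ := shape s <;>
      rw [hr3, hs3] at h <;>
      [ (have hz : (((30*k+24 + i*(12*k+11)) + (30*k+24 + j*(12*k+11)) + 1 : ℕ) : ZMod (48*k+38)) = 0 := by
            push_cast at h ⊢
            linear_combination h
         obtain ⟨t, h1, h2, h3, h4⟩ := aux17 k ((i:ℤ) + j) (60*(k:ℤ)+49)
            (by obtain ⟨d, hd3⟩ := (ZMod.natCast_eq_zero_iff _ _).mp hz
                refine ⟨(d:ℤ), ?_⟩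
                have : ((30*k+24 + i*(12*k+11)) + (30*k+24 + j*(12*k+11)) + 1 : ℤ) = (48*k+38)*d := by
                  exact_mod_cast congrArg (Nat.cast : ℕ → ℤ) hd3
                linear_combination this)
            (by push_cast; omega) (by push_cast; omega));
        (have hz : (((30*k+24 + i*(12*k+11)) + (24*k+20 + j*(12*k+11)) + 1 : ℕ) : ZMod (48*k+38)) = 0 := by
            push_cast at h ⊢
            linear_combination h
         obtain ⟨t, h1, h2, h3, h4⟩ := aux17 k ((i:ℤ) + j) (54*(k:ℤ)+45)
            (by obtain ⟨d, hd3⟩ := (ZMod.natCast_eq_zero_iff _ _).mp hz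
                refine ⟨(d:ℤ), ?_⟩
                have : ((30*k+24 + i*(12*k+11)) + (24*k+20 + j*(12*k+11)) + 1 : ℤ) = (48*k+38)*d := by
                  exact_mod_cast congrArg (Nat.cast : ℕ → ℤ) hd3
                linear_combination this)
            (by push_cast; omega) (by push_cast; omega));
        (have hz : (((24*k+20 + i*(12*k+11)) + (30*k+24 + j*(12*k+11)) + 1 : ℕ) : ZMod (48*k+38)) = 0 := by
            push_cast at h ⊢
            linear_combination h
         obtain ⟨t, h1, h2, h3, h4⟩ := aux17 k ((i:ℤ) + j) (54*(k:ℤ)+45)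
            (by obtain ⟨d, hd3⟩ := (ZMod.natCast_eq_zero_iff _ _).mp hz
                refine ⟨(d:ℤ), ?_⟩
                have : ((24*k+20 + i*(12*k+11)) + (30*k+24 + j*(12*k+11)) + 1 : ℤ) = (48*k+38)*d := by
                  exact_mod_cast congrArg (Nat.cast : ℕ → ℤ) hd3
                linear_combination this)
            (by push_cast; omega) (by push_cast; omega));
        (have hz : (((24*k+20 + i*(12*k+11)) + (24*k+20 + j*(12*k+11)) + 1 : ℕ) : ZMod (48*k+38)) = 0 := by
            push_cast at h ⊢
            linear_combination h
         obtain ⟨t, h1, h2, h3, h4⟩ := aux17 k ((i:ℤ) + j) (48*(k:ℤ)+41)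
            (by obtain ⟨d, hd3⟩ := (ZMod.natCast_eq_zero_iff _ _).mp hz
                refine ⟨(d:ℤ), ?_⟩
                have : ((24*k+20 + i*(12*k+11)) + (24*k+20 + j*(12*k+11)) + 1 : ℤ) = (48*k+38)*d := by
                  exact_mod_cast congrArg (Nat.cast : ℕ → ℤ) hd3
                linear_combination this)
            (by push_cast; omega) (by push_cast; omega))] <;>
      (interval_cases t <;> omega)
end

section
/- Fix k ≥ 0 and let n = 48k+46. Define v : Fin (24k+23) → ZMod n by v(2i) = 6k+5 + i(12k+12) for 0 ≤ i ≤ 12k+11 and v(2i+1) = 12k+11 + i(12k+12) for 0 ≤ i ≤ 12k+10. Then v is injective, and for all indices r, s, v(r) + v(s) + 1 ≠ 0 in ZMod n. -/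
private lemma stmt18_cancel (k : ℕ) (t : ℤ) (h : (24*k+23 : ℤ) ∣ t * (6*k+6))
    (hb : |t| < 24*k+23) : t = 0 := by
  have h4 : (24*k+23 : ℤ) ∣ t * (6*k+6) * 4 := h.mul_right 4
  have h5 : (24*k+23 : ℤ) ∣ t * (24*k+23) := Dvd.intro_left t rfl
  have h6 : (24*k+23 : ℤ) ∣ t := by
    have := dvd_sub h4 h5
    have heq : t * (6*k+6) * 4 - t * (24*k+23) = t := by ring
    rwa [heq] at this
  exact Int.eq_zero_of_abs_lt_dvd h6 hb

private lemma stmt18_ee (k i j : ℕ) (hi : i ≤ 12*k+11) (hj : j ≤ 12*k+11)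
    (h : ((6*k+5 + i*(12*k+12) : ℕ) : ZMod (48*k+46))
       = ((6*k+5 + j*(12*k+12) : ℕ) : ZMod (48*k+46))) : i = j := by
  rw [ZMod.natCast_eq_natCast_iff, Nat.modEq_iff_dvd] at h
  push_cast at h
  have h2 : (2:ℤ) * (24*k+23) ∣ 2 * (((j:ℤ) - i) * (6*k+6)) := by
    convert h using 1 <;> ring
  rw [mul_dvd_mul_iff_left (two_ne_zero)] at h2
  have h3 := stmt18_cancel k ((j:ℤ) - i) h2 (by
    rw [abs_lt]; constructor <;> [skip; skip] <;> push_cast <;> omega)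
  omega

private lemma stmt18_oo (k i j : ℕ) (hi : i ≤ 12*k+10) (hj : j ≤ 12*k+10)
    (h : ((12*k+11 + i*(12*k+12) : ℕ) : ZMod (48*k+46))
       = ((12*k+11 + j*(12*k+12) : ℕ) : ZMod (48*k+46))) : i = j := by
  rw [ZMod.natCast_eq_natCast_iff, Nat.modEq_iff_dvd] at h
  push_cast at h
  have h2 : (2:ℤ) * (24*k+23) ∣ 2 * (((j:ℤ) - i) * (6*k+6)) := by
    convert h using 1 <;> ring
  rw [mul_dvd_mul_iff_left (two_ne_zero)] at h2
  have h3 := stmt18_cancel k ((j:ℤ) - i) h2 (by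
    rw [abs_lt]; constructor <;> [skip; skip] <;> push_cast <;> omega)
  omega

private lemma stmt18_eo (k i j : ℕ) (hi : i ≤ 12*k+11) (hj : j ≤ 12*k+10)
    (h : ((6*k+5 + i*(12*k+12) : ℕ) : ZMod (48*k+46))
       = ((12*k+11 + j*(12*k+12) : ℕ) : ZMod (48*k+46))) : False := by
  rw [ZMod.natCast_eq_natCast_iff, Nat.modEq_iff_dvd] at h
  push_cast at h
  have h2 : (2:ℤ) * (24*k+23) ∣ 2 * ((2*((j:ℤ) - i) + 1) * (3*k+3)) := by
    convert h using 1 <;> ring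
  rw [mul_dvd_mul_iff_left (two_ne_zero)] at h2
  -- (24k+23) ∣ (2t+1)(3k+3); multiply by 8 to get (2t+1)(24k+24)
  set t : ℤ := (j:ℤ) - i with ht
  have h4 : (24*k+23 : ℤ) ∣ (2*t+1) * (3*k+3) * 8 := h2.mul_right 8
  have h5 : (24*k+23 : ℤ) ∣ (2*t+1) * (24*k+23) := Dvd.intro_left _ rfl
  have h6 : (24*k+23 : ℤ) ∣ 2*t+1 := by
    have := dvd_sub h4 h5
    have heq : (2*t+1) * (3*k+3) * 8 - (2*t+1) * (24*k+23) = 2*t+1 := by ring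
    rwa [heq] at this
  have h7 : 2*t+1 = 0 := Int.eq_zero_of_abs_lt_dvd h6 (by
    rw [abs_lt]; constructor <;> [skip; skip] <;> push_cast [ht] <;> omega)
  omega

theorem stmt18 (k : ℕ) (v : Fin (24*k+23) → ZMod (48*k+46))
    (h_even : ∀ i : ℕ, (h : 2*i < 24*k+23) →
      v ⟨2*i, h⟩ = ((6*k+5 + i*(12*k+12) : ℕ) : ZMod (48*k+46)))
    (h_odd : ∀ i : ℕ, (h : 2*i+1 < 24*k+23) →
      v ⟨2*i+1, h⟩ = ((12*k+11 + i*(12*k+12) : ℕ) : ZMod (48*k+46))) :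
    Function.Injective v ∧ ∀ r s, v r + v s + 1 ≠ 0 := by
  constructor
  · intro a b hab
    rcases Nat.even_or_odd (a : ℕ) with ⟨i, hi⟩ | ⟨i, hi⟩ <;>
      rcases Nat.even_or_odd (b : ℕ) with ⟨j, hj⟩ | ⟨j, hj⟩
    · have ha : a = ⟨2*i, by omega⟩ := Fin.ext (by simpa using (by omega : (a:ℕ) = 2*i))
      have hb : b = ⟨2*j, by omega⟩ := Fin.ext (by simpa using (by omega : (b:ℕ) = 2*j))
      rw [ha, hb, h_even i (by omega), h_even j (by omega)] at hab
      have := stmt18_ee k i j (by omega) (by omega) hab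
      rw [ha, hb]; exact Fin.ext (by simp; omega)
    · have ha : a = ⟨2*i, by omega⟩ := Fin.ext (by simpa using (by omega : (a:ℕ) = 2*i))
      have hb : b = ⟨2*j+1, by omega⟩ := Fin.ext (by simpa using (by omega : (b:ℕ) = 2*j+1))
      rw [ha, hb, h_even i (by omega), h_odd j (by omega)] at hab
      exact absurd hab (fun hab => stmt18_eo k i j (by omega) (by omega) hab)
    · have ha : a = ⟨2*i+1, by omega⟩ := Fin.ext (by simpa using (by omega : (a:ℕ) = 2*i+1))
      have hb : b = ⟨2*j, by omega⟩ := Fin.ext (by simpa using (by omega : (b:ℕ) = 2*j))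
      rw [ha, hb, h_odd i (by omega), h_even j (by omega)] at hab
      exact absurd hab.symm (fun hab => stmt18_eo k j i (by omega) (by omega) hab)
    · have ha : a = ⟨2*i+1, by omega⟩ := Fin.ext (by simpa using (by omega : (a:ℕ) = 2*i+1))
      have hb : b = ⟨2*j+1, by omega⟩ := Fin.ext (by simpa using (by omega : (b:ℕ) = 2*j+1))
      rw [ha, hb, h_odd i (by omega), h_odd j (by omega)] at hab
      have := stmt18_oo k i j (by omega) (by omega) hab
      rw [ha, hb]; exact Fin.ext (by simp; omega)
  · have hrep : ∀ x : Fin (24*k+23), ∃ c : ℕ, v x = ((2*c+1 : ℕ) : ZMod (48*k+46)) := by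
      intro x
      rcases Nat.even_or_odd (x : ℕ) with ⟨i, hi⟩ | ⟨i, hi⟩
      · have hx : x = ⟨2*i, by omega⟩ := Fin.ext (by simpa using (by omega : (x:ℕ) = 2*i))
        refine ⟨3*k+2 + i*(6*k+6), ?_⟩
        rw [hx, h_even i (by omega)]
        congr 1; ring
      · have hx : x = ⟨2*i+1, by omega⟩ := Fin.ext (by simpa using (by omega : (x:ℕ) = 2*i+1))
        refine ⟨6*k+5 + i*(6*k+6), ?_⟩
        rw [hx, h_odd i (by omega)]
        congr 1; ring
    intro r s h
    obtain ⟨c, hc⟩ := hrep r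
    obtain ⟨d, hd⟩ := hrep s
    rw [hc, hd] at h
    have h2 : ((2*c+1 + (2*d+1) + 1 : ℕ) : ZMod (48*k+46)) = 0 := by
      push_cast
      push_cast at h
      linear_combination h
    rw [ZMod.natCast_eq_zero_iff] at h2
    have h3 : 2 ∣ 2*c+1 + (2*d+1) + 1 :=
      dvd_trans ⟨24*k+23, by ring⟩ h2
    omega
end

section
/- Fix k ≥ 0 and let n = 48k+46. Define v : Fin (24k+23) → ZMod n by v(2i) = 6k+6 + i(12k+13) for 0 ≤ i ≤ 12k+11 and v(2i+1) = 24k+24 + i(12k+13) for 0 ≤ i ≤ 12k+10. Then v is injective, and for all indices r, s, v(r) + v(s) + 1 ≠ 0 in ZMod n. -/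
private lemma myred {x y m n : ℕ} (h : x = y + m * n) : x ≡ y [MOD n] := by
  subst h
  exact Nat.add_mul_mod_self_right y m n

private lemma mykey {n a b : ℕ} (ha : a < n) (hb : b < n) (h : a ≡ b [MOD n]) : a = b := by
  have h' : a % n = b % n := h
  rwa [Nat.mod_eq_of_lt ha, Nat.mod_eq_of_lt hb] at h'

private lemma inj_ee (k i j : ℕ) (hi : 2*i < 24*k+23) (hj : 2*j < 24*k+23)
    (h : 6*k+6+i*(12*k+13) ≡ 6*k+6+j*(12*k+13) [MOD 48*k+46]) : i = j := by
  have h2 := h.mul_right (40*k+39)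
  have e1 : (6*k+6+i*(12*k+13))*(40*k+39) = (4*k+4+i) + (5*k+5+i*(10*k+11))*(48*k+46) := by ring
  have e2 : (6*k+6+j*(12*k+13))*(40*k+39) = (4*k+4+j) + (5*k+5+j*(10*k+11))*(48*k+46) := by ring
  have h3 := ((myred e1).symm.trans h2).trans (myred e2)
  have h4 := mykey (by omega) (by omega) h3
  omega

private lemma inj_oo (k i j : ℕ) (hi : 2*i+1 < 24*k+23) (hj : 2*j+1 < 24*k+23)
    (h : 24*k+24+i*(12*k+13) ≡ 24*k+24+j*(12*k+13) [MOD 48*k+46]) : i = j := by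
  have h2 := h.mul_right (40*k+39)
  have e1 : (24*k+24+i*(12*k+13))*(40*k+39) = (16*k+16+i) + (20*k+20+i*(10*k+11))*(48*k+46) := by ring
  have e2 : (24*k+24+j*(12*k+13))*(40*k+39) = (16*k+16+j) + (20*k+20+j*(10*k+11))*(48*k+46) := by ring
  have h3 := ((myred e1).symm.trans h2).trans (myred e2)
  have h4 := mykey (by omega) (by omega) h3
  omega

private lemma inj_eo (k i j : ℕ) (hi : 2*i < 24*k+23) (hj : 2*j+1 < 24*k+23)
    (h : 6*k+6+i*(12*k+13) ≡ 24*k+24+j*(12*k+13) [MOD 48*k+46]) : False := by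
  have h2 := h.mul_right (40*k+39)
  have e1 : (6*k+6+i*(12*k+13))*(40*k+39) = (4*k+4+i) + (5*k+5+i*(10*k+11))*(48*k+46) := by ring
  have e2 : (24*k+24+j*(12*k+13))*(40*k+39) = (16*k+16+j) + (20*k+20+j*(10*k+11))*(48*k+46) := by ring
  have h3 := ((myred e1).symm.trans h2).trans (myred e2)
  have h4 := mykey (by omega) (by omega) h3
  omega

private lemma sum_ee (k i j : ℕ) (hi : 2*i < 24*k+23) (hj : 2*j < 24*k+23)
    (h : (6*k+6+i*(12*k+13)) + (6*k+6+j*(12*k+13)) + 1 ≡ 0 [MOD 48*k+46]) : False := by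
  have h2 := h.mul_right (40*k+39)
  have e1 : ((6*k+6+i*(12*k+13)) + (6*k+6+j*(12*k+13)) + 1)*(40*k+39)
      = (1+i+j) + ((10*k+11)*(1+i+j))*(48*k+46) := by ring
  have e2 : 0*(40*k+39) = 0 + 0*(48*k+46) := by ring
  have h3 := ((myred e1).symm.trans h2).trans (myred e2)
  have h4 := mykey (by omega) (by omega) h3
  omega

private lemma sum_oo (k i j : ℕ) (hi : 2*i+1 < 24*k+23) (hj : 2*j+1 < 24*k+23)
    (h : (24*k+24+i*(12*k+13)) + (24*k+24+j*(12*k+13)) + 1 ≡ 0 [MOD 48*k+46]) : False := by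
  have h2 := h.mul_right (40*k+39)
  have e1 : ((24*k+24+i*(12*k+13)) + (24*k+24+j*(12*k+13)) + 1)*(40*k+39)
      = (24*k+25+i+j) + (40*k+41+(i+j)*(10*k+11))*(48*k+46) := by ring
  have e2 : 0*(40*k+39) = 0 + 0*(48*k+46) := by ring
  have h3 := ((myred e1).symm.trans h2).trans (myred e2)
  have h4 := mykey (by omega) (by omega) h3
  omega

private lemma sum_eo (k i j : ℕ) (hi : 2*i < 24*k+23) (hj : 2*j+1 < 24*k+23)
    (h : (6*k+6+i*(12*k+13)) + (24*k+24+j*(12*k+13)) + 1 ≡ 0 [MOD 48*k+46]) : False := by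
  have h2 := h.mul_right (40*k+39)
  have e1 : ((6*k+6+i*(12*k+13)) + (24*k+24+j*(12*k+13)) + 1)*(40*k+39)
      = (12*k+13+i+j) + (25*k+26+(i+j)*(10*k+11))*(48*k+46) := by ring
  have e2 : 0*(40*k+39) = 0 + 0*(48*k+46) := by ring
  have h3 := ((myred e1).symm.trans h2).trans (myred e2)
  have h4 := mykey (by omega) (by omega) h3
  omega

theorem stmt19 (k : ℕ) (v : Fin (24*k+23) → ZMod (48*k+46))
    (h_even : ∀ i : ℕ, (h : 2*i < 24*k+23) →
      v ⟨2*i, h⟩ = ((6*k+6 + i*(12*k+13) : ℕ) : ZMod (48*k+46)))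
    (h_odd : ∀ i : ℕ, (h : 2*i+1 < 24*k+23) →
      v ⟨2*i+1, h⟩ = ((24*k+24 + i*(12*k+13) : ℕ) : ZMod (48*k+46))) :
    Function.Injective v ∧ ∀ r s, v r + v s + 1 ≠ 0 := by
  constructor
  · intro x y hxy
    have hxlt := x.isLt
    have hylt := y.isLt
    obtain ⟨i, hi⟩ | ⟨i, hi⟩ := Nat.even_or_odd x.val <;>
      obtain ⟨j, hj⟩ | ⟨j, hj⟩ := Nat.even_or_odd y.val
    · have hi' : 2*i < 24*k+23 := by omega
      have hj' : 2*j < 24*k+23 := by omega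
      rw [show x = ⟨2*i, hi'⟩ from Fin.ext (by simp only [Fin.val_mk]; omega),
          show y = ⟨2*j, hj'⟩ from Fin.ext (by simp only [Fin.val_mk]; omega), h_even i hi', h_even j hj',
          ZMod.natCast_eq_natCast_iff] at hxy
      have := inj_ee k i j hi' hj' hxy
      exact Fin.ext (by omega)
    · have hi' : 2*i < 24*k+23 := by omega
      have hj' : 2*j+1 < 24*k+23 := by omega
      rw [show x = ⟨2*i, hi'⟩ from Fin.ext (by simp only [Fin.val_mk]; omega),
          show y = ⟨2*j+1, hj'⟩ from Fin.ext (by simp only [Fin.val_mk]; omega), h_even i hi', h_odd j hj',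
          ZMod.natCast_eq_natCast_iff] at hxy
      exact (inj_eo k i j hi' hj' hxy).elim
    · have hi' : 2*i+1 < 24*k+23 := by omega
      have hj' : 2*j < 24*k+23 := by omega
      rw [show x = ⟨2*i+1, hi'⟩ from Fin.ext (by simp only [Fin.val_mk]; omega),
          show y = ⟨2*j, hj'⟩ from Fin.ext (by simp only [Fin.val_mk]; omega), h_odd i hi', h_even j hj',
          ZMod.natCast_eq_natCast_iff] at hxy
      exact (inj_eo k j i hj' hi' hxy.symm).elim
    · have hi' : 2*i+1 < 24*k+23 := by omega
      have hj' : 2*j+1 < 24*k+23 := by omega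
      rw [show x = ⟨2*i+1, hi'⟩ from Fin.ext (by simp only [Fin.val_mk]; omega),
          show y = ⟨2*j+1, hj'⟩ from Fin.ext (by simp only [Fin.val_mk]; omega), h_odd i hi', h_odd j hj',
          ZMod.natCast_eq_natCast_iff] at hxy
      have := inj_oo k i j hi' hj' hxy
      exact Fin.ext (by omega)
  · intro r s heq
    have hrlt := r.isLt
    have hslt := s.isLt
    obtain ⟨i, hi⟩ | ⟨i, hi⟩ := Nat.even_or_odd r.val <;>
      obtain ⟨j, hj⟩ | ⟨j, hj⟩ := Nat.even_or_odd s.val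
    · have hi' : 2*i < 24*k+23 := by omega
      have hj' : 2*j < 24*k+23 := by omega
      rw [show r = ⟨2*i, hi'⟩ from Fin.ext (by simp only [Fin.val_mk]; omega),
          show s = ⟨2*j, hj'⟩ from Fin.ext (by simp only [Fin.val_mk]; omega), h_even i hi', h_even j hj'] at heq
      have h0 : (((6*k+6+i*(12*k+13)) + (6*k+6+j*(12*k+13)) + 1 : ℕ) : ZMod (48*k+46))
          = ((0 : ℕ) : ZMod (48*k+46)) := by push_cast at heq ⊢; linear_combination heq
      rw [ZMod.natCast_eq_natCast_iff] at h0
      exact sum_ee k i j hi' hj' h0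
    · have hi' : 2*i < 24*k+23 := by omega
      have hj' : 2*j+1 < 24*k+23 := by omega
      rw [show r = ⟨2*i, hi'⟩ from Fin.ext (by simp only [Fin.val_mk]; omega),
          show s = ⟨2*j+1, hj'⟩ from Fin.ext (by simp only [Fin.val_mk]; omega), h_even i hi', h_odd j hj'] at heq
      have h0 : (((6*k+6+i*(12*k+13)) + (24*k+24+j*(12*k+13)) + 1 : ℕ) : ZMod (48*k+46))
          = ((0 : ℕ) : ZMod (48*k+46)) := by push_cast at heq ⊢; linear_combination heq
      rw [ZMod.natCast_eq_natCast_iff] at h0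
      exact sum_eo k i j hi' hj' h0
    · have hi' : 2*i+1 < 24*k+23 := by omega
      have hj' : 2*j < 24*k+23 := by omega
      rw [show r = ⟨2*i+1, hi'⟩ from Fin.ext (by simp only [Fin.val_mk]; omega),
          show s = ⟨2*j, hj'⟩ from Fin.ext (by simp only [Fin.val_mk]; omega), h_odd i hi', h_even j hj'] at heq
      have h0 : (((6*k+6+j*(12*k+13)) + (24*k+24+i*(12*k+13)) + 1 : ℕ) : ZMod (48*k+46))
          = ((0 : ℕ) : ZMod (48*k+46)) := by push_cast at heq ⊢; linear_combination heq
      rw [ZMod.natCast_eq_natCast_iff] at h0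
      exact sum_eo k j i hj' hi' h0
    · have hi' : 2*i+1 < 24*k+23 := by omega
      have hj' : 2*j+1 < 24*k+23 := by omega
      rw [show r = ⟨2*i+1, hi'⟩ from Fin.ext (by simp only [Fin.val_mk]; omega),
          show s = ⟨2*j+1, hj'⟩ from Fin.ext (by simp only [Fin.val_mk]; omega), h_odd i hi', h_odd j hj'] at heq
      have h0 : (((24*k+24+i*(12*k+13)) + (24*k+24+j*(12*k+13)) + 1 : ℕ) : ZMod (48*k+46))
          = ((0 : ℕ) : ZMod (48*k+46)) := by push_cast at heq ⊢; linear_combination heq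
      rw [ZMod.natCast_eq_natCast_iff] at h0
      exact sum_oo k i j hi' hj' h0
end
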